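/- Let p ∈ (1,∞) with conjugate exponent p′, let α ∈ (0,1], and let h : ℝ² → ℝ be measurable with w_α h ∈ L¹(ℝ²). Suppose u ∈ L^{p′}(ℝ²;ℝ²) satisfies ‖u(·−y) − u(·)‖_{L^{p′}(ℝ²)} ≤ A|y|^α for all y ∈ ℝ² and some constant A > 0, and let q ∈ L^p(ℝ²). Then for every ε > 0, ‖h^ε ∗ (u q) − u (h^ε ∗ q)‖_{L¹(ℝ²)} ≤ A ε^α ‖w_α h‖_{L¹} ‖q‖_{L^p}. -/

import Mathlib

open MeasureTheory Real Set Filter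
open scoped ENNReal Topology

noncomputable section

abbrev R2 := EuclideanSpace ℝ (Fin 2)

/-- Scalar convolution on ℝ². -/
def conv (f g : R2 → ℝ) : R2 → ℝ := fun x => ∫ y, f (x - y) * g y

/-- Convolution of a scalar kernel with a vector field on ℝ². -/
def convV (f : R2 → ℝ) (g : R2 → R2) : R2 → R2 := fun x => ∫ y, f (x - y) • g y

/-- Rescaled filter `f^ε(x) = ε⁻² f(x/ε)`. -/
def fscale (ε : ℝ) (f : R2 → ℝ) : R2 → ℝ := fun x => (ε ^ 2)⁻¹ * f (ε⁻¹ • x)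

/-- The enorm of a difference of two integrals is bounded by the lintegral of
the pointwise enorm of the difference (no integrability needed). -/
lemma enorm_integral_sub_le {X : Type*} [MeasurableSpace X] {μ : Measure X}
    {E : Type*} [NormedAddCommGroup E] [NormedSpace ℝ E]
    {f g : X → E} (hf : AEStronglyMeasurable f μ) (hg : AEStronglyMeasurable g μ) :
    (‖(∫ x, f x ∂μ) - ∫ x, g x ∂μ‖₊ : ℝ≥0∞) ≤ ∫⁻ x, ‖f x - g x‖₊ ∂μ := by
  by_cases hfin : (∫⁻ x, (‖f x - g x‖₊ : ℝ≥0∞) ∂μ) = ⊤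
  · rw [hfin]; exact le_top
  · have hint : Integrable (fun x => f x - g x) μ :=
      ⟨hf.sub hg, lt_top_iff_ne_top.mpr hfin⟩
    by_cases hfi : Integrable f μ
    · have hgi : Integrable g μ := by
        have := hfi.sub hint
        simpa [Pi.sub_def, sub_sub_cancel] using this
      rw [← integral_sub hfi hgi]
      exact enorm_integral_le_lintegral_enorm _
    · have hgi : ¬ Integrable g μ := by
        intro hgi
        exact hfi (by simpa [Pi.add_def, sub_add_cancel] using hint.add hgi)
      rw [integral_undef hfi, integral_undef hgi]
      simp

/-- the Hölder-type commutator estimate: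
if `w_α h ∈ L¹`, `u ∈ L^{p'}` satisfies `‖u(·−y) − u‖_{L^{p'}} ≤ A|y|^α`, and
`q ∈ L^p`, then `‖h^ε ∗ (u q) − u (h^ε ∗ q)‖_{L¹} ≤ A ε^α ‖w_α h‖_{L¹} ‖q‖_{L^p}`. -/
theorem stmt1 (p p' : ℝ) (hp : 1 < p) (hp' : 1 < p') (hpc : 1 / p + 1 / p' = 1)
    (α : ℝ) (hα0 : 0 < α) (hα1 : α ≤ 1)
    (h : R2 → ℝ) (hm : Measurable h)
    (hwα : MemLp (fun x => ‖x‖ ^ α * h x) 1 volume)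
    (u : R2 → R2) (A : ℝ) (hA : 0 < A)
    (hu : MemLp u (ENNReal.ofReal p') volume)
    (hHolder : ∀ y : R2,
      eLpNorm (fun x => u (x - y) - u x) (ENNReal.ofReal p') volume ≤
        ENNReal.ofReal (A * ‖y‖ ^ α))
    (q : R2 → ℝ) (hq : MemLp q (ENNReal.ofReal p) volume)
    (ε : ℝ) (hε : 0 < ε) :
    eLpNorm
        (fun x => convV (fscale ε h) (fun y => q y • u y) x - conv (fscale ε h) q x • u x)
        1 volume ≤
      ENNReal.ofReal (A * ε ^ α) * eLpNorm (fun x => ‖x‖ ^ α * h x) 1 volume *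
        eLpNorm q (ENNReal.ofReal p) volume := by
  have hεne : ε ≠ 0 := hε.ne'
  set K : R2 → ℝ := fscale ε h with hK
  have hKm : Measurable K := by
    exact (hm.comp (measurable_const_smul ε⁻¹)).const_mul _
  have hqm : AEStronglyMeasurable q volume := hq.1
  have hum : AEStronglyMeasurable u volume := hu.1
  have hp0 : (0:ℝ) < p := lt_trans one_pos hp
  have hp'0 : (0:ℝ) < p' := lt_trans one_pos hp'
  have hpq : Real.HolderConjugate p p' := Real.holderConjugate_iff.mpr ⟨hp, by simpa [one_div] using hpc⟩
  set Q := eLpNorm q (ENNReal.ofReal p) volume with hQ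
  set Φ : R2 → R2 → ℝ≥0∞ := fun x z =>
    (‖K z‖₊ : ℝ≥0∞) * ((‖q (x - z)‖₊ : ℝ≥0∞) * (‖u (x - z) - u x‖₊ : ℝ≥0∞)) with hΦ
  -- Step 1: pointwise bound on the commutator
  have step1 : ∀ x : R2,
      (‖convV K (fun y => q y • u y) x - conv K q x • u x‖₊ : ℝ≥0∞)
        ≤ ∫⁻ z, Φ x z := by
    intro x
    have e1 : convV K (fun y => q y • u y) x
        = ∫ z, (K z * q (x - z)) • u (x - z) := by
      rw [convV, ← integral_sub_left_eq_self
        (fun z => (K z * q (x - z)) • u (x - z)) volume x]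
      congr 1; ext z
      simp [sub_sub_cancel, mul_smul, mul_assoc]
    have e2a : conv K q x = ∫ z, K z * q (x - z) := by
      rw [conv, ← integral_sub_left_eq_self (fun z => K z * q (x - z)) volume x]
      congr 1; ext z
      simp [sub_sub_cancel]
    have e2 : conv K q x • u x = ∫ z, (K z * q (x - z)) • u x := by
      rw [e2a]; exact (integral_smul_const _ _).symm
    have hqx : AEStronglyMeasurable (fun z => q (x - z)) volume := by
      simpa [Function.comp_def] using hqm.comp_quasiMeasurePreserving
        (quasiMeasurePreserving_sub_left_of_right_invariant volume x)
    have hux : AEStronglyMeasurable (fun z => u (x - z)) volume := by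
      simpa [Function.comp_def] using hum.comp_quasiMeasurePreserving
        (quasiMeasurePreserving_sub_left_of_right_invariant volume x)
    have hF : AEStronglyMeasurable (fun z => (K z * q (x - z)) • u (x - z)) volume :=
      (hKm.aestronglyMeasurable.mul hqx).smul hux
    have hG : AEStronglyMeasurable (fun z => (K z * q (x - z)) • u x) volume :=
      (hKm.aestronglyMeasurable.mul hqx).smul aestronglyMeasurable_const
    rw [e1, e2]
    calc (‖(∫ z, (K z * q (x - z)) • u (x - z)) - ∫ z, (K z * q (x - z)) • u x‖₊ : ℝ≥0∞)
        ≤ ∫⁻ z, ‖(K z * q (x - z)) • u (x - z) - (K z * q (x - z)) • u x‖₊ :=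
          enorm_integral_sub_le hF hG
      _ = ∫⁻ z, Φ x z := by
          apply lintegral_congr
          intro z
          rw [← smul_sub, nnnorm_smul, nnnorm_mul]
          push_cast
          ring
  -- measurability of Φ on the product space
  have hΦm : AEMeasurable (Function.uncurry Φ) (volume.prod (volume : Measure R2)) := by
    have hsub : Measure.QuasiMeasurePreserving (fun pz : R2 × R2 => pz.1 - pz.2)
        (volume.prod volume) volume :=
      quasiMeasurePreserving_sub_of_right_invariant volume volume
    have h1 : Measurable (fun pz : R2 × R2 => (‖K pz.2‖₊ : ℝ≥0∞)) :=
      (hKm.comp measurable_snd).enorm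
    have h2 : AEMeasurable (fun pz : R2 × R2 => (‖q (pz.1 - pz.2)‖₊ : ℝ≥0∞))
        (volume.prod volume) := by
      simpa [Function.comp_def, enorm_eq_nnnorm] using hqm.enorm.comp_quasiMeasurePreserving hsub
    have h3u1 : AEStronglyMeasurable (fun pz : R2 × R2 => u (pz.1 - pz.2))
        (volume.prod volume) := by
      simpa [Function.comp_def] using hum.comp_quasiMeasurePreserving hsub
    have h3u2 : AEStronglyMeasurable (fun pz : R2 × R2 => u pz.1)
        (volume.prod volume) := by
      simpa [Function.comp_def] using
        hum.comp_quasiMeasurePreserving Measure.quasiMeasurePreserving_fst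
    have h3 : AEMeasurable (fun pz : R2 × R2 => (‖u (pz.1 - pz.2) - u pz.1‖₊ : ℝ≥0∞))
        (volume.prod volume) := (h3u1.sub h3u2).enorm
    exact h1.aemeasurable.mul (h2.mul h3)
  -- Step 3: the per-z Hölder bound
  have step3 : ∀ z : R2, (∫⁻ x, Φ x z) ≤
      (‖K z‖₊ : ℝ≥0∞) * (Q * ENNReal.ofReal (A * ‖z‖ ^ α)) := by
    intro z
    rw [hΦ]
    simp only []
    rw [lintegral_const_mul' _ _ ENNReal.coe_ne_top]
    apply mul_le_mul_right
    have hqz : AEMeasurable (fun x => (‖q (x - z)‖₊ : ℝ≥0∞)) volume := by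
      simpa [Function.comp_def, enorm_eq_nnnorm] using hqm.enorm.comp_quasiMeasurePreserving
        (measurePreserving_sub_right volume z).quasiMeasurePreserving
    have huz1 : AEStronglyMeasurable (fun x => u (x - z)) volume := by
      simpa [Function.comp_def] using hum.comp_quasiMeasurePreserving
        (measurePreserving_sub_right volume z).quasiMeasurePreserving
    have huz : AEMeasurable (fun x => (‖u (x - z) - u x‖₊ : ℝ≥0∞)) volume :=
      (huz1.sub hum).enorm
    have hHold := ENNReal.lintegral_mul_le_Lp_mul_Lq volume hpq hqz huz
    simp only [Pi.mul_apply] at hHold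
    have eq1 : (∫⁻ x, (‖q (x - z)‖₊ : ℝ≥0∞) ^ p) ^ (1 / p) = Q := by
      rw [lintegral_sub_right_eq_self (fun x => (‖q x‖₊ : ℝ≥0∞) ^ p) z, hQ,
        eLpNorm_eq_lintegral_rpow_enorm_toReal (ENNReal.ofReal_pos.mpr hp0).ne'
          ENNReal.ofReal_ne_top,
        ENNReal.toReal_ofReal hp0.le]
      rfl
    have eq2 : (∫⁻ x, (‖u (x - z) - u x‖₊ : ℝ≥0∞) ^ p') ^ (1 / p')
        = eLpNorm (fun x => u (x - z) - u x) (ENNReal.ofReal p') volume := by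
      rw [eLpNorm_eq_lintegral_rpow_enorm_toReal (ENNReal.ofReal_pos.mpr hp'0).ne'
          ENNReal.ofReal_ne_top,
        ENNReal.toReal_ofReal hp'0.le]
      rfl
    calc (∫⁻ x, (‖q (x - z)‖₊ : ℝ≥0∞) * (‖u (x - z) - u x‖₊ : ℝ≥0∞)) ≤
        (∫⁻ x, (‖q (x - z)‖₊ : ℝ≥0∞) ^ p) ^ (1 / p) *
          (∫⁻ x, (‖u (x - z) - u x‖₊ : ℝ≥0∞) ^ p') ^ (1 / p') := hHold
      _ = Q * eLpNorm (fun x => u (x - z) - u x) (ENNReal.ofReal p') volume := by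
          rw [eq1, eq2]
      _ ≤ Q * ENNReal.ofReal (A * ‖z‖ ^ α) := mul_le_mul_right (hHolder z) _
  -- Step 5: the scaling identity for the weighted L¹ norm of K
  have hrank : Module.finrank ℝ R2 = 2 := by simp
  have hscale : (∫⁻ z, ENNReal.ofReal (‖z‖ ^ α) * (‖K z‖₊ : ℝ≥0∞))
      = ENNReal.ofReal (ε ^ α) *
        ∫⁻ w, ENNReal.ofReal (‖w‖ ^ α) * (‖h w‖₊ : ℝ≥0∞) := by
    have hmap := Measure.map_addHaar_smul (volume : Measure R2) (r := ε) hεne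
    rw [hrank] at hmap
    have hg : Measurable (fun z : R2 => ENNReal.ofReal (‖z‖ ^ α) * (‖K z‖₊ : ℝ≥0∞)) := by
      apply Measurable.mul (f := fun z : R2 => ENNReal.ofReal (‖z‖ ^ α)) (g := fun z : R2 => (‖K z‖₊ : ℝ≥0∞))
      · exact ENNReal.measurable_ofReal.comp (measurable_norm.pow_const α)
      · exact hKm.enorm
    have hsm : AEMeasurable (fun w : R2 => ε • w) volume :=
      (measurable_const_smul ε).aemeasurable
    have hmain := lintegral_map' (f := fun z : R2 =>
      ENNReal.ofReal (‖z‖ ^ α) * (‖K z‖₊ : ℝ≥0∞)) (g := fun w : R2 => ε • w)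
      hg.aemeasurable hsm
    rw [hmap, lintegral_smul_measure] at hmain
    -- compute the right side of hmain
    have hKval : ∀ w : R2, K (ε • w) = (ε ^ 2)⁻¹ * h w := by
      intro w
      rw [hK]
      simp only [fscale, smul_smul, inv_mul_cancel₀ hεne, one_smul]
    have hptwise : ∀ w : R2,
        ENNReal.ofReal (‖ε • w‖ ^ α) * (‖K (ε • w)‖₊ : ℝ≥0∞)
          = (ENNReal.ofReal (ε ^ α) * ENNReal.ofReal ((ε ^ 2)⁻¹)) *
            (ENNReal.ofReal (‖w‖ ^ α) * (‖h w‖₊ : ℝ≥0∞)) := by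
      intro w
      rw [hKval w, norm_smul, Real.norm_eq_abs, abs_of_pos hε,
        Real.mul_rpow hε.le (norm_nonneg _),
        ENNReal.ofReal_mul (Real.rpow_nonneg hε.le _), nnnorm_mul, ENNReal.coe_mul,
        ← enorm_eq_nnnorm ((ε ^ 2)⁻¹ : ℝ), Real.enorm_eq_ofReal (by positivity)]
      ring
    rw [lintegral_congr hptwise, lintegral_const_mul' _ _
      (ENNReal.mul_ne_top ENNReal.ofReal_ne_top ENNReal.ofReal_ne_top)] at hmain
    have habs : |((ε : ℝ) ^ 2)⁻¹| = (ε ^ 2)⁻¹ := abs_of_pos (by positivity)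
    rw [habs] at hmain
    refine (ENNReal.mul_right_inj (a := ENNReal.ofReal ((ε ^ 2)⁻¹))
      (by simp only [ne_eq, ENNReal.ofReal_eq_zero, not_le]; positivity)
      ENNReal.ofReal_ne_top).mp ?_
    rw [smul_eq_mul] at hmain
    rw [hmain]
    ring
  have hW0 : eLpNorm (fun x => ‖x‖ ^ α * h x) 1 volume
      = ∫⁻ w, ENNReal.ofReal (‖w‖ ^ α) * (‖h w‖₊ : ℝ≥0∞) := by
    rw [eLpNorm_one_eq_lintegral_enorm]
    apply lintegral_congr
    intro w
    rw [enorm_eq_nnnorm, nnnorm_mul, ENNReal.coe_mul, ← enorm_eq_nnnorm (‖w‖ ^ α),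
      Real.enorm_eq_ofReal (Real.rpow_nonneg (norm_nonneg _) _)]
  -- assemble everything
  have hQne : Q ≠ ⊤ := hq.2.ne
  calc eLpNorm (fun x => convV K (fun y => q y • u y) x - conv K q x • u x) 1 volume
      = ∫⁻ x, (‖convV K (fun y => q y • u y) x - conv K q x • u x‖₊ : ℝ≥0∞) :=
        eLpNorm_one_eq_lintegral_enorm
    _ ≤ ∫⁻ x, ∫⁻ z, Φ x z := lintegral_mono step1
    _ = ∫⁻ z, ∫⁻ x, Φ x z := lintegral_lintegral_swap hΦm
    _ ≤ ∫⁻ z, (‖K z‖₊ : ℝ≥0∞) * (Q * ENNReal.ofReal (A * ‖z‖ ^ α)) :=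
        lintegral_mono step3
    _ = (Q * ENNReal.ofReal A) *
        ∫⁻ z, ENNReal.ofReal (‖z‖ ^ α) * (‖K z‖₊ : ℝ≥0∞) := by
        rw [← lintegral_const_mul' _ _
          (ENNReal.mul_ne_top hQne ENNReal.ofReal_ne_top)]
        apply lintegral_congr
        intro z
        rw [ENNReal.ofReal_mul hA.le]
        ring
    _ = (Q * ENNReal.ofReal A) * (ENNReal.ofReal (ε ^ α) *
        ∫⁻ w, ENNReal.ofReal (‖w‖ ^ α) * (‖h w‖₊ : ℝ≥0∞)) := by rw [hscale]
    _ = ENNReal.ofReal (A * ε ^ α) * eLpNorm (fun x => ‖x‖ ^ α * h x) 1 volume * Q := by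
        rw [hW0, ENNReal.ofReal_mul hA.le]
        ring
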